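/- arXiv:2312.01750 — 2 statements merged into one kernel-verified Lean document; each statement's English description precedes it below -/
import Mathlib

section
/- Let A be a domain, B = A[X] a polynomial ring in one variable over A, and δ a non-trivial exponential map on B over A. Then: (1) B^δ = A; (2) X is a local slice of δ; and (3) δ(X) − X ∈ tA[t]. -/
open Polynomial

/-- An *exponential map* on a commutative ring `B` over `A`: an `A`-algebra homomorphism
`δ : B → B[t]` such that evaluation at `t = 0` is the identity and
`δ_s ∘ δ_t = δ_{s+t}` (the co-associativity / iterativity condition). -/
structure ExpMap (A : Type*) (B : Type*) [CommRing A] [CommRing B] [Algebra A B] where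
  toFun : B →ₐ[A] Polynomial B
  eval_zero : ∀ b : B, (toFun b).eval 0 = b
  coassoc : ∀ b : B,
    (toFun b).map (toFun.toRingHom) =
      (toFun b).eval₂ (Polynomial.C.comp Polynomial.C)
        (Polynomial.C Polynomial.X + Polynomial.X)

namespace ExpMap

variable {A B : Type*} [CommRing A] [CommRing B] [Algebra A B]

/-- The ring of invariants `B^δ = {x ∈ B | δ(x) = x}`. -/
def invariants (δ : ExpMap A B) : Subalgebra A B where
  carrier := {x : B | δ.toFun x = Polynomial.C x}
  mul_mem' := by
    intro a b ha hb
    simp only [Set.mem_setOf_eq] at *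
    rw [map_mul, ha, hb, ← map_mul]
  add_mem' := by
    intro a b ha hb
    simp only [Set.mem_setOf_eq] at *
    rw [map_add, ha, hb, ← map_add]
  algebraMap_mem' := by
    intro r
    simp only [Set.mem_setOf_eq, AlgHom.commutes, Polynomial.algebraMap_apply]

/-- `δ` is non-trivial if `B^δ ≠ B`. -/
def IsNontrivial (δ : ExpMap A B) : Prop := δ.invariants ≠ ⊤

/-- The iterative higher derivations attached to `δ`: `δ(x) = Σ (D i x) tⁱ`. -/
noncomputable def D (δ : ExpMap A B) (i : ℕ) (x : B) : B := (δ.toFun x).coeff i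

/-- A *local slice* of `δ`: an element whose image under `δ` has minimal positive
`t`-degree. -/
def IsLocalSlice (δ : ExpMap A B) (x : B) : Prop :=
  0 < (δ.toFun x).natDegree ∧
    ∀ y : B, 0 < (δ.toFun y).natDegree → (δ.toFun x).natDegree ≤ (δ.toFun y).natDegree

/-- A *slice* of `δ`: a local slice `x` such that `D n x` is a unit, where
`n = deg_t δ(x)`. -/
def IsSlice (δ : ExpMap A B) (x : B) : Prop :=
  δ.IsLocalSlice x ∧ IsUnit ((δ.toFun x).coeff (δ.toFun x).natDegree)

end ExpMap

/-- `X : Fin n → B` is a *coordinate system* of `B` over `A`, i.e. `B = A[X₁, …, Xₙ]`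
is a polynomial ring in the `n` variables `X₁, …, Xₙ` over `A`. -/
def IsCoordSystem (A : Type*) {B : Type*} [CommRing A] [CommRing B] [Algebra A B]
    {n : ℕ} (X : Fin n → B) : Prop :=
  Function.Bijective (MvPolynomial.aeval (R := A) X)

namespace ExpMap

variable {A B : Type*} [CommRing A] [CommRing B] [Algebra A B]

/-- The *rank* of an exponential map `δ` on `B = A^[n]`: the least `r` such that some
coordinate system `{X₁, …, Xₙ}` satisfies `A[X₁, …, X_{n-r}] ⊆ B^δ`. -/
noncomputable def rank (δ : ExpMap A B) (n : ℕ) : ℕ :=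
  sInf {r : ℕ | ∃ X : Fin n → B, IsCoordSystem A X ∧
    Algebra.adjoin A (X '' {i : Fin n | (i : ℕ) < n - r}) ≤ δ.invariants}

/-- `X ∈ Γ_δ(B)`: a coordinate system with `A[X₁, …, X_{n-r}] ⊆ B^δ` where `r = rank δ`. -/
def InGamma (δ : ExpMap A B) {n : ℕ} (X : Fin n → B) : Prop :=
  IsCoordSystem A X ∧
    Algebra.adjoin A (X '' {i : Fin n | (i : ℕ) < n - δ.rank n}) ≤ δ.invariants

/-- `δ` is *rigid* if the subring `A[X₁, …, X_{n-r}]` does not depend on the choice of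
`{X₁, …, Xₙ} ∈ Γ_δ(B)`. -/
def IsRigid (δ : ExpMap A B) (n : ℕ) : Prop :=
  ∀ X X' : Fin n → B, δ.InGamma X → δ.InGamma X' →
    Algebra.adjoin A (X '' {i : Fin n | (i : ℕ) < n - δ.rank n}) =
      Algebra.adjoin A (X' '' {i : Fin n | (i : ℕ) < n - δ.rank n})

/-- `δ` is *triangular with respect to the coordinate system `X`* over `A`. -/
def IsTriangularWith (δ : ExpMap A B) {n : ℕ} (X : Fin n → B) : Prop :=
  IsCoordSystem A X ∧
    (∀ i : Fin n, ∀ j : ℕ, 0 < j →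
      (δ.toFun (X i)).coeff j ∈ Algebra.adjoin A (X '' {l : Fin n | (l : ℕ) < (i : ℕ)})) ∧
    (∀ i : Fin n, δ.toFun (X i) ≠ Polynomial.C (X i) →
      (∀ l : Fin n, (l : ℕ) < (i : ℕ) → δ.toFun (X l) = Polynomial.C (X l)) →
      δ.IsLocalSlice (X i))

/-- `δ` is *triangular* over `A` (in `n` variables). -/
def IsTriangular (δ : ExpMap A B) (n : ℕ) : Prop :=
  ∃ X : Fin n → B, δ.IsTriangularWith X

/-- `δ` is *triangular over the subring `R`* of `B` (with `B = R^[m]`). -/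
def IsTriangularOver (δ : ExpMap A B) (R : Subalgebra A B) (m : ℕ) : Prop :=
  ∃ X : Fin m → B,
    Function.Bijective (MvPolynomial.aeval (R := ↥R) X) ∧
    (∀ i : Fin m, ∀ j : ℕ, 0 < j →
      (δ.toFun (X i)).coeff j ∈ Algebra.adjoin (↥R) (X '' {l : Fin m | (l : ℕ) < (i : ℕ)})) ∧
    (∀ i : Fin m, δ.toFun (X i) ≠ Polynomial.C (X i) →
      (∀ l : Fin m, (l : ℕ) < (i : ℕ) → δ.toFun (X l) = Polynomial.C (X l)) →
      δ.IsLocalSlice (X i))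

end ExpMap

/-!
Every `b = f(X)` has `δ(b) = f(δ(X))`, so `deg_t δ(b) = deg f · deg_t δ(X)`: all `t`-degrees are
multiples of `n = deg_t δ(X)`, which is positive as `δ` is non-trivial, and the elements of
`t`-degree less than `n` are exactly those of `A`. The invariants have `t`-degree `0`, and
comparing coefficients in `δ_s ∘ δ_t = δ_{s+t}` gives `deg_t δ(D_j X) ≤ n - j < n` for `j > 0`.
-/

theorem Polynomial.algebraMap_injective_of_injective_aeval {R S : Type*} [CommSemiring R]
    [Semiring S] [Algebra R S] {x : S} (hx : Function.Injective (aeval (R := R) x)) :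
    Function.Injective (algebraMap R S) :=
  fun a b h => C_injective <| hx <| by rwa [aeval_C, aeval_C]

namespace ExpMap

variable {A B : Type*} [CommRing A] [CommRing B] [Algebra A B] (δ : ExpMap A B)

theorem coeff_zero_toFun (b : B) : (δ.toFun b).coeff 0 = b := by
  rw [coeff_zero_eq_eval_zero, δ.eval_zero]

theorem mem_invariants_iff_natDegree_eq_zero {b : B} :
    b ∈ δ.invariants ↔ (δ.toFun b).natDegree = 0 := by
  refine ⟨fun hb => by rw [show δ.toFun b = C b from hb, natDegree_C], fun hb => ?_⟩
  change δ.toFun b = C b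
  rw [eq_C_of_natDegree_eq_zero hb, coeff_zero_toFun]

theorem toFun_aeval (x : B) (f : A[X]) :
    δ.toFun (aeval x f) = (f.map (algebraMap A B)).comp (δ.toFun x) := by
  rw [← aeval_algHom_apply, comp, eval₂_map, aeval_def]
  exact eval₂_congr (by ext a; simp [Polynomial.algebraMap_apply]) rfl rfl

theorem natDegree_toFun_aeval [NoZeroDivisors B] (hAB : Function.Injective (algebraMap A B))
    (x : B) (f : A[X]) :
    (δ.toFun (aeval x f)).natDegree = f.natDegree * (δ.toFun x).natDegree := by
  rw [toFun_aeval, natDegree_comp, natDegree_map_eq_of_injective hAB]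

/-- Comparing `t^j`-coefficients in `δ_s(δ_t x) = δ_{s+t} x` expresses `δ_s(D_j x)` as
`∑ₖ D_k x · (k choose j) s^(k-j)`. -/
theorem natDegree_toFun_D_le (x : B) (j : ℕ) :
    (δ.toFun (δ.D j x)).natDegree ≤ (δ.toFun x).natDegree - j := by
  have h := congrArg (coeff · j) (δ.coassoc x)
  simp only [coeff_map, eval₂_eq_sum, Polynomial.sum_def, finsetSum_coeff, RingHom.comp_apply,
    coeff_C_mul, add_comm (C X), coeff_X_add_C_pow] at h
  change δ.toFun (δ.D j x) = _ at h
  rw [h]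
  refine natDegree_sum_le_of_forall_le _ _ fun k hk => ?_
  calc _ ≤ (X ^ (k - j) * (k.choose j : B[X])).natDegree := natDegree_C_mul_le _ _
    _ ≤ k - j := natDegree_mul_le.trans <| by
      rw [natDegree_natCast, add_zero]; exact natDegree_X_pow_le _
    _ ≤ _ := Nat.sub_le_sub_right (le_natDegree_of_mem_supp k hk) j

theorem natDegree_toFun_pos {x : B} (hx : Function.Surjective (aeval (R := A) x))
    (hδ : δ.IsNontrivial) : 0 < (δ.toFun x).natDegree := by
  refine Nat.pos_of_ne_zero fun h => hδ <| (Algebra.eq_top_iff).2 fun b => ?_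
  obtain ⟨f, rfl⟩ := hx b
  rw [mem_invariants_iff_natDegree_eq_zero, ← Nat.le_zero, ← mul_zero f.natDegree, ← h,
    toFun_aeval]
  exact natDegree_comp_le.trans (Nat.mul_le_mul_right _ natDegree_map_le)

section PolynomialRingInOneVariable

variable [NoZeroDivisors B] {x : B} (hx : Function.Bijective (aeval (R := A) x))
include hx

theorem mem_range_algebraMap_of_natDegree_toFun_lt {b : B}
    (hb : (δ.toFun b).natDegree < (δ.toFun x).natDegree) : b ∈ Set.range (algebraMap A B) := by
  obtain ⟨f, rfl⟩ := hx.2 b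
  rw [δ.natDegree_toFun_aeval (algebraMap_injective_of_injective_aeval hx.1)] at hb
  have hf : f.natDegree = 0 :=
    Nat.lt_one_iff.1 <| Nat.lt_of_mul_lt_mul_right (a := (δ.toFun x).natDegree) <| by rwa [one_mul]
  exact ⟨f.coeff 0, by rw [← aeval_C, ← eq_C_of_natDegree_eq_zero hf]⟩

theorem isLocalSlice_of_bijective_aeval (hδ : δ.IsNontrivial) : δ.IsLocalSlice x := by
  refine ⟨δ.natDegree_toFun_pos hx.2 hδ, fun y hy => ?_⟩
  obtain ⟨f, rfl⟩ := hx.2 y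
  rw [δ.natDegree_toFun_aeval (algebraMap_injective_of_injective_aeval hx.1)] at hy ⊢
  exact Nat.le_mul_of_pos_left _ (Nat.pos_of_mul_pos_right hy)

theorem invariants_eq_bot_of_bijective_aeval (hδ : δ.IsNontrivial) : δ.invariants = ⊥ :=
  eq_bot_iff.2 fun _ hb => Algebra.mem_bot.2 <|
    δ.mem_range_algebraMap_of_natDegree_toFun_lt hx <|
      (δ.mem_invariants_iff_natDegree_eq_zero.1 hb).trans_lt (δ.natDegree_toFun_pos hx.2 hδ)

theorem D_mem_range_algebraMap_of_bijective_aeval (hδ : δ.IsNontrivial) {j : ℕ} (hj : 0 < j) :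
    δ.D j x ∈ Set.range (algebraMap A B) :=
  δ.mem_range_algebraMap_of_natDegree_toFun_lt hx <| (δ.natDegree_toFun_D_le x j).trans_lt <|
    Nat.sub_lt (δ.natDegree_toFun_pos hx.2 hδ) hj

end PolynomialRingInOneVariable

end ExpMap

theorem expMap_on_poly1_general
    {A B : Type*} [CommRing A] [CommRing B] [IsDomain B] [Algebra A B]
    (X : B) (hX : Function.Bijective (Polynomial.aeval (R := A) X))
    (δ : ExpMap A B) (hδ : δ.IsNontrivial) :
    δ.invariants = ⊥ ∧ δ.IsLocalSlice X ∧
      ∀ j : ℕ, 0 < j → (δ.toFun X).coeff j ∈ Set.range (algebraMap A B) :=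
  ⟨δ.invariants_eq_bot_of_bijective_aeval hX hδ, δ.isLocalSlice_of_bijective_aeval hX hδ,
    fun _ hj => δ.D_mem_range_algebraMap_of_bijective_aeval hX hδ hj⟩

/-- Let `A` be a domain, `B = A[X] = A^[1]` and `δ` a non-trivial
exponential map on `B` over `A`. Then (1) `B^δ = A`; (2) `X` is a local slice of `δ`;
(3) `δ(X) - X ∈ tA[t]`. -/
theorem expMap_on_poly1
    {A B : Type*} [CommRing A] [IsDomain A] [CommRing B] [IsDomain B] [Algebra A B]
    (hAB : Function.Injective (algebraMap A B))
    (X : B) (hX : Function.Bijective (Polynomial.aeval (R := A) X))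
    (δ : ExpMap A B) (hδ : δ.IsNontrivial) :
    δ.invariants = ⊥ ∧ δ.IsLocalSlice X ∧
      ∀ j : ℕ, 0 < j → (δ.toFun X).coeff j ∈ Set.range (algebraMap A B) :=
  expMap_on_poly1_general X hX δ hδ
end

section
/- Let A be a domain, B = A^[n] a polynomial ring in n variables over A, and δ an exponential map on B over A of rank 1. If {X₁,…,Xₙ} is a coordinate system of B over A with A[X₁,…,X_{n−1}] ⊆ B^δ, then B^δ = A[X₁,…,X_{n−1}] and δ(Xₙ) − Xₙ ∈ t·B^δ[t]. -/
open Polynomial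

/-! Put `R = A[X₁, …, X_{n-1}]` and `Y = Xₙ`, so that `B = R[Y]` and `R ⊆ B^δ`. Then `δ` is
determined by `P = δ(Y)`: `δ(g(Y)) = g(P)`. Reading `P` in `R[t][Y]`, the identity
`δ_{-t} ∘ δ_t = id` says `P(-t) ∘ P = Y`, so `P` has `Y`-degree `1` and a unit, hence constant,
leading coefficient: `P = uY + c(t)` with `u ∈ Rˣ` and `c ∈ R[t]`, which is the second claim.
Rank `1` forces `deg_t P > 0`, and then `deg_t δ(g(Y)) = deg g · deg_t P` shows that invariants
have `Y`-degree `0`, i.e. lie in `R`. -/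

namespace Polynomial

variable {R B : Type*} [CommRing R] [CommRing B] [Algebra R B]

/-- Given `e : R[Y] ≃ B`, reads `B[t] = R[Y][t]` as `R[t][Y]`. -/
noncomputable def swapVia (e : R[X] ≃ₐ[R] B) : B[X] ≃ₐ[R] R[X][X] :=
  (mapAlgEquiv e.symm).trans Bivariate.swap

variable (e : R[X] ≃ₐ[R] B)

@[simp]
theorem swapVia_C (b : B) : swapVia e (C b) = (e.symm b).map C := by
  simp [swapVia, Bivariate.swap_C]

@[simp]
theorem swapVia_X : swapVia e X = C X := by
  simp [swapVia, Bivariate.swap_Y]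

theorem swap_swapVia (p : B[X]) : Bivariate.swap (swapVia e p) = p.map e.symm := by
  simp [swapVia, Bivariate.swap_swap_apply]

theorem algEquiv_C (r : R) : e (C r) = algebraMap R B r := by
  rw [← algebraMap_eq, e.commutes]

end Polynomial

theorem Subalgebra.mem_of_natDegree_symm_eq_zero {A B : Type*} [CommRing A] [CommRing B]
    [Algebra A B] {R : Subalgebra A B} (e : R[X] ≃ₐ[R] B) {b : B}
    (h : (e.symm b).natDegree = 0) : b ∈ R := by
  rw [← e.apply_symm_apply b, eq_C_of_natDegree_eq_zero h, algEquiv_C]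
  exact SetLike.coe_mem _

theorem IsCoordSystem.bijective_aeval_adjoin {A B : Type*} [CommRing A] [CommRing B]
    [Algebra A B] {n : ℕ} {X : Fin n → B} (hX : IsCoordSystem A X) {s : Set (Fin n)}
    {i : Fin n} (hs : sᶜ = {i}) :
    Function.Bijective (aeval (R := Algebra.adjoin A (X '' s)) (X i)) := by
  have hind : AlgebraicIndependent A X := algebraicIndependent_iff_injective_aeval.2 hX.1
  have hi : i ∉ s := (Set.mem_compl_iff _ _).1 (hs ▸ Set.mem_singleton i)
  refine ⟨transcendental_iff_injective.1 (hind.transcendental_adjoin hi), fun b => ?_⟩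
  have hb : b ∈ (Algebra.adjoin (Algebra.adjoin A (X '' s)) {X i}).restrictScalars A := by
    rw [← Algebra.adjoin_union_eq_adjoin_adjoin, ← Set.image_singleton, ← Set.image_union, ← hs,
      Set.union_compl_self, Set.image_univ, Algebra.adjoin_range_eq_range_aeval]
    exact hX.2 b
  rwa [Subalgebra.mem_restrictScalars, Algebra.adjoin_singleton_eq_range_aeval] at hb

namespace ExpMap

section

variable {A B : Type*} [CommRing A] [CommRing B] [Algebra A B] (δ : ExpMap A B)

/-- `δ_{-t} ∘ δ_t = δ_0 = id`. -/
theorem eval₂_toFun_neg_X (b : B) : (δ.toFun b).eval₂ δ.toFun.toRingHom (-X) = C b := by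
  have h := congrArg (eval (-X)) (δ.coassoc b)
  rw [eval_map, ← coe_evalRingHom, hom_eval₂] at h
  have hC : (evalRingHom (-X : B[X])).comp (C.comp C) = C := by ext; simp
  rw [h, hC, coe_evalRingHom, eval_add, eval_C, eval_X, add_neg_cancel, eval₂_at_zero,
    coeff_zero_eq_eval_zero, δ.eval_zero]

theorem mem_invariants_of_natDegree_eq_zero {b : B} (h : (δ.toFun b).natDegree = 0) :
    b ∈ δ.invariants := by
  show δ.toFun b = C b
  rw [eq_C_of_natDegree_eq_zero h, coeff_zero_eq_eval_zero, δ.eval_zero]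

theorem rank_eq_zero_of_invariants_eq_top {n : ℕ} {X : Fin n → B} (hX : IsCoordSystem A X)
    (h : δ.invariants = ⊤) : δ.rank n = 0 :=
  Nat.sInf_eq_zero.2 (Or.inl ⟨X, hX, h ▸ le_top⟩)

end

variable {A B : Type*} [CommRing A] [CommRing B] [Algebra A B] (δ : ExpMap A B)
  {R : Subalgebra A B} (hR : R ≤ δ.invariants) (e : R[X] ≃ₐ[R] B)
include hR

theorem toFun_coe (r : R) : δ.toFun r = C (r : B) := hR r.2

theorem toFun_eq_comp (b : B) :
    δ.toFun b = ((e.symm b).map (algebraMap R B)).comp (δ.toFun (e X)) := by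
  have : (δ.toFun : B →+* B[X]).comp (e : R[X] →+* B) =
      (compRingHom (δ.toFun (e X))).comp (mapRingHom (algebraMap R B)) :=
    ringHom_ext (fun r => by simp [algEquiv_C, δ.toFun_coe hR]) (by simp)
  simpa using congrArg (fun f => f (e.symm b)) this

theorem swapVia_toFun (b : B) :
    swapVia e (δ.toFun b) = ((e.symm b).map C).comp (swapVia e (δ.toFun (e X))) := by
  have : ((swapVia e : B[X] →+* R[X][X]).comp δ.toFun).comp (e : R[X] →+* B) =
      (compRingHom (swapVia e (δ.toFun (e X)))).comp (mapRingHom C) :=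
    ringHom_ext (fun r => by
      have hr : e.symm r = C r := e.symm_apply_eq.2 (algEquiv_C e r).symm
      simp [algEquiv_C, δ.toFun_coe hR, hr]) (by simp)
  simpa using congrArg (fun f => f (e.symm b)) this

/-- `δ_{-t} ∘ δ_t = id`, read in `R[t][Y]`. -/
theorem swapVia_comp_neg_X_comp :
    (swapVia e ((δ.toFun (e X)).comp (-X))).comp (swapVia e (δ.toFun (e X))) = X := by
  set Q := swapVia e (δ.toFun (e X))
  have : (swapVia e : B[X] →+* R[X][X]).comp (eval₂RingHom δ.toFun.toRingHom (-X)) =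
      (compRingHom Q).comp ((swapVia e : B[X] →+* R[X][X]).comp (compRingHom (-X))) :=
    ringHom_ext (fun b => by
      simp only [RingHom.comp_apply, coe_eval₂RingHom, eval₂_C, coe_compRingHom_apply, C_comp]
      change swapVia e (δ.toFun b) = (swapVia e (C b)).comp Q
      rw [δ.swapVia_toFun hR e, swapVia_C]) (by simp)
  have h := congrArg (fun f => f (δ.toFun (e X))) this
  simp only [RingHom.comp_apply, coe_eval₂RingHom, δ.eval₂_toFun_neg_X] at h
  simpa using h.symm

variable [IsDomain B]

theorem coeff_toFun_mem {j : ℕ} (hj : 0 < j) : (δ.toFun (e X)).coeff j ∈ R := by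
  have hGQ := δ.swapVia_comp_neg_X_comp hR e
  have hmap := swap_swapVia e (δ.toFun (e X))
  generalize swapVia e (δ.toFun (e X)) = Q at hGQ hmap
  have hdeg := congrArg natDegree hGQ
  rw [natDegree_comp, natDegree_X] at hdeg
  have hQ1 : Q.natDegree = 1 := Nat.eq_one_of_mul_eq_one_left hdeg
  have hlc := congrArg leadingCoeff hGQ
  rw [leadingCoeff_comp (q := Q) (by omega), Nat.eq_one_of_mul_eq_one_right hdeg, pow_one,
    leadingCoeff_X] at hlc
  obtain ⟨u, -, hu⟩ := Polynomial.isUnit_iff.1 (IsUnit.of_mul_eq_one_right _ hlc)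
  have hQ : Q = C (C u) * X + C (Q.coeff 0) := by
    rw [hu, leadingCoeff, hQ1]
    exact eq_X_add_C_of_natDegree_le_one hQ1.le
  rw [hQ] at hmap
  have hcoeff := congrArg (coeff · j) hmap
  simp only [map_add, map_mul, Bivariate.swap_C, map_C, Bivariate.swap_Y, coeff_add, coeff_mul_C,
    coeff_C, hj.ne', ↓reduceIte, zero_mul, coeff_map, zero_add, RingHom.coe_coe] at hcoeff
  exact R.mem_of_natDegree_symm_eq_zero e (by rw [← hcoeff, natDegree_C])

theorem natDegree_toFun (b : B) :
    (δ.toFun b).natDegree = (e.symm b).natDegree * (δ.toFun (e X)).natDegree := by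
  rw [δ.toFun_eq_comp hR e, natDegree_comp,
    natDegree_map_eq_of_injective (FaithfulSMul.algebraMap_injective R B)]

theorem invariants_le_of_natDegree_pos (h : 0 < (δ.toFun (e X)).natDegree) :
    δ.invariants ≤ R := fun b hb => by
  have h0 : (δ.toFun b).natDegree = 0 := by rw [hb, natDegree_C]
  rw [δ.natDegree_toFun hR e] at h0
  exact R.mem_of_natDegree_symm_eq_zero e ((mul_eq_zero.1 h0).resolve_right h.ne')

theorem invariants_eq_top_of_natDegree_eq_zero (h : (δ.toFun (e X)).natDegree = 0) :
    δ.invariants = ⊤ :=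
  eq_top_iff.2 fun b _ =>
    δ.mem_invariants_of_natDegree_eq_zero (by rw [δ.natDegree_toFun hR e, h, mul_zero])

end ExpMap

/-- Let `A` be a domain, `B = A^[n]`, and `δ` an exponential map on `B`
over `A` of rank `1`. If `{X₁, …, Xₙ}` is a coordinate system with
`A[X₁, …, X_{n-1}] ⊆ B^δ`, then `B^δ = A[X₁, …, X_{n-1}]` and `δ(Xₙ) - Xₙ ∈ t·B^δ[t]`. -/
theorem invariants_of_rank_one
    {A B : Type*} [CommRing A] [CommRing B] [IsDomain B] [Algebra A B]
    {n : ℕ} (hn : 0 < n) (X : Fin n → B) (hX : IsCoordSystem A X)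
    (δ : ExpMap A B) (hrank : δ.rank n = 1)
    (hinv : Algebra.adjoin A (X '' {i : Fin n | (i : ℕ) < n - 1}) ≤ δ.invariants) :
    δ.invariants = Algebra.adjoin A (X '' {i : Fin n | (i : ℕ) < n - 1}) ∧
      ∀ j : ℕ, 0 < j →
        (δ.toFun (X ⟨n - 1, by omega⟩)).coeff j ∈ δ.invariants := by
  have hs : {i : Fin n | (i : ℕ) < n - 1}ᶜ = {⟨n - 1, by omega⟩} := by
    ext i
    simp only [Set.mem_compl_iff, Set.mem_ofPred_eq, not_lt, Set.mem_singleton_iff, Fin.ext_iff]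
    omega
  let e := AlgEquiv.ofBijective _ (hX.bijective_aeval_adjoin hs)
  have he : e Polynomial.X = X ⟨n - 1, by omega⟩ := aeval_X _
  have hdeg : 0 < (δ.toFun (e Polynomial.X)).natDegree := by
    refine Nat.pos_of_ne_zero fun h => ?_
    have := δ.rank_eq_zero_of_invariants_eq_top hX
      (δ.invariants_eq_top_of_natDegree_eq_zero hinv e h)
    omega
  refine ⟨le_antisymm (δ.invariants_le_of_natDegree_pos hinv e hdeg) hinv, fun j hj => ?_⟩
  rw [← he]
  exact hinv (δ.coeff_toFun_mem hinv e hj)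
end
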